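/- arXiv:1811.00458 — 2 statements merged into one kernel-verified Lean document; each statement's English description precedes it below -/
import Mathlib

section
/- The optimal discriminator maximizing L(D) = (1/2)·E_{x∼P}[log D(x)] + (1/2)·E_{x∼Q}[log(1 − D(x))] over measurable functions D: X → (0,1) is D*(x) = p(x)/(p(x) + q(x)) almost everywhere (on the set where p(x)+q(x) > 0). -/
/-!
Pointwise, `d ↦ a log d + b log (1 - d)` on `(0, 1)` is maximised exactly at `d = a / (a + b)`
when `a + b > 0`: with `s = a + b`, the gap to the maximum splits into the two Gibbs terms
`a log a + (d s - a) - a log (d s)` and its analogue for `b`, each nonnegative by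
`log x ≤ x - 1` and zero only when `d s = a`. Integrating the pointwise inequality gives optimality
of `D*`, and an equality of integrals of two a.e.-ordered functions forces them to agree a.e.
-/

open MeasureTheory Real

noncomputable def binaryLogLikelihood (a b d : ℝ) : ℝ := a * log d + b * log (1 - d)

lemma mul_log_lt_mul_log_add_sub {a x : ℝ} (ha : 0 ≤ a) (hx : 0 < x) (hne : x ≠ a) :
    a * log x < a * log a + (x - a) := by
  rcases ha.eq_or_lt with rfl | ha
  · simpa using hx
  have hlog : log (x / a) < x / a - 1 :=
    log_lt_sub_one_of_pos (div_pos hx ha) (by rwa [Ne, div_eq_one_iff_eq ha.ne'])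
  rw [log_div hx.ne' ha.ne'] at hlog
  have hscale : a * (x / a - 1) = x - a := by field_simp
  nlinarith [mul_lt_mul_of_pos_left hlog ha]

lemma mul_log_le_mul_log_add_sub {a x : ℝ} (ha : 0 ≤ a) (hx : 0 < x) :
    a * log x ≤ a * log a + (x - a) := by
  rcases eq_or_ne x a with rfl | hne
  · simp
  · exact (mul_log_lt_mul_log_add_sub ha hx hne).le

lemma mul_log_div_eq {a s : ℝ} (hs : s ≠ 0) : a * log (a / s) = a * log a - a * log s := by
  rcases eq_or_ne a 0 with rfl | ha
  · simp
  · rw [log_div ha hs, mul_sub]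

lemma binaryLogLikelihood_ratio_sub {a b d : ℝ} (hs : 0 < a + b) (hd0 : 0 < d) (hd1 : d < 1) :
    binaryLogLikelihood a b (a / (a + b)) - binaryLogLikelihood a b d
      = (a * log a + (d * (a + b) - a) - a * log (d * (a + b)))
        + (b * log b + ((1 - d) * (a + b) - b) - b * log ((1 - d) * (a + b))) := by
  have h1 : 1 - a / (a + b) = b / (a + b) := by field_simp; ring
  unfold binaryLogLikelihood
  rw [h1, mul_log_div_eq hs.ne', mul_log_div_eq hs.ne', log_mul hd0.ne' hs.ne',
    log_mul (sub_pos.2 hd1).ne' hs.ne']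
  ring

lemma binaryLogLikelihood_le_ratio {a b d : ℝ} (ha : 0 ≤ a) (hb : 0 ≤ b)
    (hd0 : 0 < d) (hd1 : d < 1) :
    binaryLogLikelihood a b d ≤ binaryLogLikelihood a b (a / (a + b)) := by
  rcases (add_nonneg ha hb).eq_or_lt with hs | hs
  · obtain ⟨rfl, rfl⟩ : a = 0 ∧ b = 0 := ⟨by linarith, by linarith⟩
    simp [binaryLogLikelihood]
  have := binaryLogLikelihood_ratio_sub hs hd0 hd1
  have := mul_log_le_mul_log_add_sub ha (mul_pos hd0 hs)
  have := mul_log_le_mul_log_add_sub hb (mul_pos (sub_pos.2 hd1) hs)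
  linarith

lemma binaryLogLikelihood_lt_ratio {a b d : ℝ} (ha : 0 ≤ a) (hb : 0 ≤ b) (hs : 0 < a + b)
    (hd0 : 0 < d) (hd1 : d < 1) (hne : d ≠ a / (a + b)) :
    binaryLogLikelihood a b d < binaryLogLikelihood a b (a / (a + b)) := by
  have hne' : d * (a + b) ≠ a := fun h => hne (by rw [eq_div_iff hs.ne', h])
  have := binaryLogLikelihood_ratio_sub hs hd0 hd1
  have := mul_log_lt_mul_log_add_sub ha (mul_pos hd0 hs) hne'
  have := mul_log_le_mul_log_add_sub hb (mul_pos (sub_pos.2 hd1) hs)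
  linarith

theorem stmt3_general {X : Type*} [MeasurableSpace X] (μ : Measure X)
    (p q : X → ℝ) (hp : ∀ x, 0 ≤ p x) (hq : ∀ x, 0 ≤ q x)
    (Dstar : X → ℝ) (hD : ∀ x, Dstar x = p x / (p x + q x))
    (hint1 : Integrable (fun x => p x * Real.log (Dstar x)) μ)
    (hint2 : Integrable (fun x => q x * Real.log (1 - Dstar x)) μ) :
    ∀ D : X → ℝ, Measurable D → (∀ x, D x ∈ Set.Ioo (0 : ℝ) 1) →
      Integrable (fun x => p x * Real.log (D x)) μ →
      Integrable (fun x => q x * Real.log (1 - D x)) μ →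
      ((1/2) * ∫ x, p x * Real.log (D x) ∂μ + (1/2) * ∫ x, q x * Real.log (1 - D x) ∂μ
          ≤ (1/2) * ∫ x, p x * Real.log (Dstar x) ∂μ
            + (1/2) * ∫ x, q x * Real.log (1 - Dstar x) ∂μ) ∧
      ((1/2) * ∫ x, p x * Real.log (D x) ∂μ + (1/2) * ∫ x, q x * Real.log (1 - D x) ∂μ
          = (1/2) * ∫ x, p x * Real.log (Dstar x) ∂μ
            + (1/2) * ∫ x, q x * Real.log (1 - Dstar x) ∂μ →
        ∀ᵐ x ∂μ, 0 < p x + q x → D x = Dstar x) := by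
  intro D _ hD01 hintD1 hintD2
  set F := fun x => binaryLogLikelihood (p x) (q x) (D x)
  set G := fun x => binaryLogLikelihood (p x) (q x) (Dstar x)
  have hFG : F ≤ G := fun x => by
    simpa only [F, G, hD x] using binaryLogLikelihood_le_ratio (hp x) (hq x) (hD01 x).1 (hD01 x).2
  have hintF : Integrable F μ := hintD1.add hintD2
  have hintG : Integrable G μ := hint1.add hint2
  have hsplitF : ∫ x, F x ∂μ = _ := integral_add hintD1 hintD2
  have hsplitG : ∫ x, G x ∂μ = _ := integral_add hint1 hint2
  refine ⟨by linarith [integral_mono hintF hintG hFG], fun heq => ?_⟩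
  have hae : F =ᵐ[μ] G :=
    (integral_eq_iff_of_ae_le hintF hintG (.of_forall hFG)).1 (by linarith)
  filter_upwards [hae] with x hx hpos
  by_contra hne
  rw [hD x] at hne
  refine (binaryLogLikelihood_lt_ratio (hp x) (hq x) hpos (hD01 x).1 (hD01 x).2 hne).ne ?_
  simpa only [F, G, hD x] using hx

/-- The optimal discriminator for the objective
`(1/2) E_P[log D] + (1/2) E_Q[log (1 - D)]` is `D*(x) = p(x) / (p(x) + q(x))`,
almost everywhere on the set where `p(x) + q(x) > 0`. -/
theorem stmt3 {X : Type*} [MeasurableSpace X] (μ : Measure X)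
    (p q : X → ℝ) (hp : ∀ x, 0 ≤ p x) (hq : ∀ x, 0 ≤ q x)
    (hpm : Measurable p) (hqm : Measurable q)
    (hp1 : ∫ x, p x ∂μ = 1) (hq1 : ∫ x, q x ∂μ = 1)
    (Dstar : X → ℝ) (hD : ∀ x, Dstar x = p x / (p x + q x))
    (hint1 : Integrable (fun x => p x * Real.log (Dstar x)) μ)
    (hint2 : Integrable (fun x => q x * Real.log (1 - Dstar x)) μ) :
    ∀ D : X → ℝ, Measurable D → (∀ x, D x ∈ Set.Ioo (0 : ℝ) 1) →
      Integrable (fun x => p x * Real.log (D x)) μ →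
      Integrable (fun x => q x * Real.log (1 - D x)) μ →
      ((1/2) * ∫ x, p x * Real.log (D x) ∂μ + (1/2) * ∫ x, q x * Real.log (1 - D x) ∂μ
          ≤ (1/2) * ∫ x, p x * Real.log (Dstar x) ∂μ
            + (1/2) * ∫ x, q x * Real.log (1 - Dstar x) ∂μ) ∧
      ((1/2) * ∫ x, p x * Real.log (D x) ∂μ + (1/2) * ∫ x, q x * Real.log (1 - D x) ∂μ
          = (1/2) * ∫ x, p x * Real.log (Dstar x) ∂μ
            + (1/2) * ∫ x, q x * Real.log (1 - Dstar x) ∂μ →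
        ∀ᵐ x ∂μ, 0 < p x + q x → D x = Dstar x) :=
  stmt3_general μ p q hp hq Dstar hD hint1 hint2
end

section
/- For probability distributions P, Q on X with densities p, q and any measurable D: X → (0,1), the objective (1/2)E_P[log D] + (1/2)E_Q[log(1−D)] is bounded above by its value at D* = p/(p+q), which equals (1/2)·(JSD(P‖Q)·2 − 2·log 2)/1, i.e., JSD(P‖Q) − log 2, where JSD is the Jensen–Shannon divergence. -/
/-!
Pointwise, `t ↦ a log t + b log (1 - t)` is maximised on `(0, 1)` at `t = a / (a + b)`: this is
Gibbs' inequality for the two-point distributions `(t, 1 - t)` and `(a, b) / (a + b)`, obtained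
from `log x ≤ x - 1`. Integrating gives the upper bound, attained at `D* = p / (p + q)`. Since
`p / ((p + q) / 2) = 2 · p / (p + q)` and `P`, `Q` have mass one, the value there is
`JSD(P‖Q) - log 2`.
-/

open MeasureTheory

/-- The GAN discriminator objective `(1/2) E_P[log D] + (1/2) E_Q[log(1-D)]`. -/
noncomputable def ganObjective {X : Type*} [MeasurableSpace X] (μ : Measure X)
    (p q D : X → ℝ) : ℝ :=
  (1 / 2) * ∫ x, p x * Real.log (D x) ∂μ + (1 / 2) * ∫ x, q x * Real.log (1 - D x) ∂μ

/-- The Jensen–Shannon divergence `JSD(P‖Q) = (1/2) KL(P‖M) + (1/2) KL(Q‖M)` with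
`M = (P+Q)/2`, expressed via the densities `p, q` w.r.t. a common dominating measure. -/
noncomputable def jsDiv {X : Type*} [MeasurableSpace X] (μ : Measure X)
    (p q : X → ℝ) : ℝ :=
  (1 / 2) * ∫ x, p x * Real.log (p x / ((p x + q x) / 2)) ∂μ
    + (1 / 2) * ∫ x, q x * Real.log (q x / ((p x + q x) / 2)) ∂μ

namespace Real

theorem mul_log_le_mul_log_div_add_sub {a t c : ℝ} (ha : 0 ≤ a) (ht : 0 < t) (hc : 0 < c) :
    a * log t ≤ a * log (a / c) + (c * t - a) := by
  rcases ha.eq_or_lt with rfl | ha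
  · simpa using (mul_pos hc ht).le
  have h : log t - log (a / c) ≤ c * t / a - 1 := by
    rw [← log_div ht.ne' (div_pos ha hc).ne', div_div_eq_mul_div, mul_comm t c]
    exact log_le_sub_one_of_pos (by positivity)
  have := mul_le_mul_of_nonneg_left h ha.le
  rw [mul_sub, mul_sub, mul_div_cancel₀ _ ha.ne', mul_one] at this
  linarith

theorem mul_log_add_mul_log_one_sub_le {a b t : ℝ} (ha : 0 ≤ a) (hb : 0 ≤ b) (ht₀ : 0 < t)
    (ht₁ : t < 1) :
    a * log t + b * log (1 - t) ≤ a * log (a / (a + b)) + b * log (b / (a + b)) := by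
  rcases (add_nonneg ha hb).eq_or_lt with hab | hab
  · obtain ⟨rfl, rfl⟩ : a = 0 ∧ b = 0 := ⟨by linarith, by linarith⟩
    simp
  have h₁ := mul_log_le_mul_log_div_add_sub ha ht₀ hab
  have h₂ := mul_log_le_mul_log_div_add_sub hb (sub_pos.2 ht₁) hab
  linarith

theorem log_one_sub_div_add (a b : ℝ) : log (1 - a / (a + b)) = log (b / (a + b)) := by
  rcases eq_or_ne (a + b) 0 with h | h
  · simp [h]
  · rw [one_sub_div h, add_sub_cancel_left]

theorem mul_log_div_div_two {a s : ℝ} (h : a = 0 ∨ s ≠ 0) :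
    a * log (a / (s / 2)) = a * log (a / s) + log 2 * a := by
  rcases h with rfl | hs
  · simp
  rcases eq_or_ne a 0 with rfl | ha
  · simp
  rw [div_div_eq_mul_div, mul_div_right_comm, log_mul (div_ne_zero ha hs) two_ne_zero]
  ring

end Real

section

variable {X : Type*} [MeasurableSpace X] {μ : Measure X}

theorem integral_mul_log_div_div_two {p s : X → ℝ} (h : ∀ x, p x = 0 ∨ s x ≠ 0)
    (hp : Integrable p μ) (hps : Integrable (fun x => p x * Real.log (p x / s x)) μ) :
    ∫ x, p x * Real.log (p x / (s x / 2)) ∂μ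
      = ∫ x, p x * Real.log (p x / s x) ∂μ + Real.log 2 * ∫ x, p x ∂μ := by
  simp_rw [Real.mul_log_div_div_two (h _)]
  rw [integral_add hps (hp.const_mul _), integral_const_mul]

variable {p q : X → ℝ}

theorem ganObjective_optimal :
    ganObjective μ p q (fun x => p x / (p x + q x))
      = (1 / 2) * ∫ x, p x * Real.log (p x / (p x + q x)) ∂μ
        + (1 / 2) * ∫ x, q x * Real.log (q x / (p x + q x)) ∂μ := by
  simp only [ganObjective, Real.log_one_sub_div_add]

theorem ganObjective_le_ganObjective_optimal (hp : ∀ x, 0 ≤ p x) (hq : ∀ x, 0 ≤ q x)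
    (hpD : Integrable (fun x => p x * Real.log (p x / (p x + q x))) μ)
    (hqD : Integrable (fun x => q x * Real.log (q x / (p x + q x))) μ)
    {D : X → ℝ} (hD : ∀ x, D x ∈ Set.Ioo (0 : ℝ) 1)
    (hp_log : Integrable (fun x => p x * Real.log (D x)) μ)
    (hq_log : Integrable (fun x => q x * Real.log (1 - D x)) μ) :
    ganObjective μ p q D ≤ ganObjective μ p q (fun x => p x / (p x + q x)) := by
  rw [ganObjective_optimal, ganObjective]
  have h := integral_mono (hp_log.add hq_log) (hpD.add hqD) fun x =>
    Real.mul_log_add_mul_log_one_sub_le (hp x) (hq x) (hD x).1 (hD x).2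
  rw [integral_add' hp_log hq_log, integral_add' hpD hqD] at h
  linarith

theorem jsDiv_sub_log_two (hp : ∀ x, 0 ≤ p x) (hq : ∀ x, 0 ≤ q x)
    (hp1 : ∫ x, p x ∂μ = 1) (hq1 : ∫ x, q x ∂μ = 1)
    (hpD : Integrable (fun x => p x * Real.log (p x / (p x + q x))) μ)
    (hqD : Integrable (fun x => q x * Real.log (q x / (p x + q x))) μ) :
    jsDiv μ p q - Real.log 2 = ganObjective μ p q (fun x => p x / (p x + q x)) := by
  have hp_ne (x : X) : p x = 0 ∨ p x + q x ≠ 0 :=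
    (hp x).eq_or_lt.imp Eq.symm fun h => (add_pos_of_pos_of_nonneg h (hq x)).ne'
  have hq_ne (x : X) : q x = 0 ∨ p x + q x ≠ 0 :=
    (hq x).eq_or_lt.imp Eq.symm fun h => (add_pos_of_nonneg_of_pos (hp x) h).ne'
  have hpI := Integrable.of_integral_ne_zero (hp1 ▸ one_ne_zero : ∫ x, p x ∂μ ≠ 0)
  have hqI := Integrable.of_integral_ne_zero (hq1 ▸ one_ne_zero : ∫ x, q x ∂μ ≠ 0)
  rw [ganObjective_optimal, jsDiv, integral_mul_log_div_div_two hp_ne hpI hpD,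
    integral_mul_log_div_div_two hq_ne hqI hqD, hp1, hq1]
  ring

end

theorem stmt12_general {X : Type*} [MeasurableSpace X] (μ : Measure X)
    (p q : X → ℝ) (hp : ∀ x, 0 ≤ p x) (hq : ∀ x, 0 ≤ q x)
    (hp1 : ∫ x, p x ∂μ = 1) (hq1 : ∫ x, q x ∂μ = 1)
    (hint1 : Integrable (fun x => p x * Real.log (p x / (p x + q x))) μ)
    (hint2 : Integrable (fun x => q x * Real.log (q x / (p x + q x))) μ) :
    (∀ D : X → ℝ, Measurable D → (∀ x, D x ∈ Set.Ioo (0 : ℝ) 1) →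
        Integrable (fun x => p x * Real.log (D x)) μ →
        Integrable (fun x => q x * Real.log (1 - D x)) μ →
        ganObjective μ p q D ≤ jsDiv μ p q - Real.log 2) ∧
      ganObjective μ p q (fun x => p x / (p x + q x)) = jsDiv μ p q - Real.log 2 := by
  rw [jsDiv_sub_log_two hp hq hp1 hq1 hint1 hint2]
  exact ⟨fun D _ hD hp_log hq_log =>
    ganObjective_le_ganObjective_optimal hp hq hint1 hint2 hD hp_log hq_log, rfl⟩

/-- The objective is bounded above by its value at `D* = p/(p+q)`, which equals
`JSD(P‖Q) - log 2`. -/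
theorem stmt12 {X : Type*} [MeasurableSpace X] (μ : Measure X)
    (p q : X → ℝ) (hp : ∀ x, 0 ≤ p x) (hq : ∀ x, 0 ≤ q x)
    (hpm : Measurable p) (hqm : Measurable q)
    (hp1 : ∫ x, p x ∂μ = 1) (hq1 : ∫ x, q x ∂μ = 1)
    (hint1 : Integrable (fun x => p x * Real.log (p x / (p x + q x))) μ)
    (hint2 : Integrable (fun x => q x * Real.log (q x / (p x + q x))) μ)
    (hint3 : Integrable (fun x => p x * Real.log (p x / ((p x + q x) / 2))) μ)
    (hint4 : Integrable (fun x => q x * Real.log (q x / ((p x + q x) / 2))) μ) :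
    (∀ D : X → ℝ, Measurable D → (∀ x, D x ∈ Set.Ioo (0 : ℝ) 1) →
        Integrable (fun x => p x * Real.log (D x)) μ →
        Integrable (fun x => q x * Real.log (1 - D x)) μ →
        ganObjective μ p q D ≤ jsDiv μ p q - Real.log 2) ∧
      ganObjective μ p q (fun x => p x / (p x + q x)) = jsDiv μ p q - Real.log 2 :=
  stmt12_general μ p q hp hq hp1 hq1 hint1 hint2
end
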